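/- For any τ > 0 and real matrix Q ∈ ℝ^{m×n} with SVD Q = U Σ Vᵀ, the matrix P* = U S_τ(Σ) Vᵀ, where S_τ applies soft-thresholding S_τ(σ) = sign(σ)·max(|σ|−τ, 0) to each singular value, minimizes the function P ↦ τ‖P‖_* + (1/2)‖P − Q‖_F² over all P ∈ ℝ^{m×n}. -/

import Mathlib

open Matrix

/-- Squared Frobenius norm. -/
noncomputable def frobSq {m n : ℕ} (A : Matrix (Fin m) (Fin n) ℝ) : ℝ :=
  ∑ i, ∑ j, (A i j) ^ 2

/-- Nuclear norm: sum of singular values, i.e. of square roots of the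
eigenvalues of AᵀA. -/
noncomputable def nuclearNorm {m n : ℕ} (A : Matrix (Fin m) (Fin n) ℝ) : ℝ :=
  ∑ i, Real.sqrt ((Matrix.isHermitian_conjTranspose_mul_self A).eigenvalues i)

/-- Scalar soft-thresholding operator S_τ(σ) = sign(σ)·max(|σ|−τ, 0). -/
noncomputable def softThresh (τ σ : ℝ) : ℝ :=
  Real.sign σ * max (|σ| - τ) 0

/-!
Both norms are invariant under `P ↦ U P Vᵀ` with `U`, `V` orthogonal, so we may replace `P` by
`A = Uᵀ P V` and `Q` by `Σ`. At a diagonal matrix the objective splits into the scalar problems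
`a ↦ τ |a| + ½ (a - σᵢ)²`, each minimized by `S_τ(σᵢ)`. For an arbitrary `A` the same diagonal
sum is only a lower bound of the objective: `∑ᵢ (Aᵢᵢ - σᵢ)² ≤ ‖A - Σ‖_F²` trivially, and
`∑ᵢ |Aᵢᵢ| ≤ ‖A‖_*` because, with `W` an orthonormal eigenbasis of `AᵀA`, the columns of `B = A W`
are orthogonal with norms the singular values of `A`, and Cauchy–Schwarz applied column by column
to `A = B Wᵀ` bounds the diagonal.
-/

open Finset

lemma Fintype.sum_comp_le_sum_of_injective {α β : Type*} [Fintype α] [Fintype β] {e : α → β}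
    (he : e.Injective) {f : β → ℝ} (hf : ∀ b, 0 ≤ f b) : ∑ a, f (e a) ≤ ∑ b, f b :=
  (sum_map univ ⟨e, he⟩ f).symm.trans_le (sum_le_univ_sum_of_nonneg hf)

lemma Real.sqrt_sum_sq_eq_sum_abs {ι : Type*} [Fintype ι] {f : ι → ℝ}
    (hf : ∀ k l, f k ≠ 0 → f l ≠ 0 → k = l) : √(∑ k, f k ^ 2) = ∑ k, |f k| := by
  by_cases h0 : ∀ k, f k = 0
  · simp [h0]
  push Not at h0
  obtain ⟨k, hk⟩ := h0
  have hzero : ∀ l ≠ k, f l = 0 := fun l hl => by_contra fun h => hl (hf l k h hk)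
  rw [Fintype.sum_eq_single k fun l hl => by simp [hzero l hl],
    Fintype.sum_eq_single k fun l hl => by simp [hzero l hl], Real.sqrt_sq_eq_abs]

lemma Matrix.sum_sq_apply_eq_transpose_mul_self_apply {ι κ : Type*} [Fintype ι]
    (B : Matrix ι κ ℝ) (j : κ) : ∑ i, B i j ^ 2 = (Bᵀ * B) j j := by
  simp [mul_apply, sq]

section RectDiagonal

variable {m n : ℕ}

def rectDiagPos (m n : ℕ) (k : Fin (min m n)) : Fin m × Fin n :=
  (Fin.castLE (min_le_left m n) k, Fin.castLE (min_le_right m n) k)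

lemma rectDiagPos_injective : (rectDiagPos m n).Injective :=
  fun _ _ h => Fin.castLE_injective (min_le_left m n) (congrArg Prod.fst h)

lemma mem_range_rectDiagPos {p : Fin m × Fin n} (h : (p.1 : ℕ) = p.2) :
    p ∈ Set.range (rectDiagPos m n) :=
  ⟨⟨p.1, lt_min p.1.2 (h ▸ p.2.2)⟩, Prod.ext rfl (Fin.ext h)⟩

def rectDiag (A : Matrix (Fin m) (Fin n) ℝ) (k : Fin (min m n)) : ℝ :=
  A (Fin.castLE (min_le_left m n) k) (Fin.castLE (min_le_right m n) k)

def IsRectDiagonal (C : Matrix (Fin m) (Fin n) ℝ) : Prop :=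
  ∀ (i : Fin m) (j : Fin n), (i : ℕ) ≠ (j : ℕ) → C i j = 0

lemma sum_rectDiag_le_sum_entries (A : Matrix (Fin m) (Fin n) ℝ) {f : ℝ → ℝ}
    (hf : ∀ x, 0 ≤ f x) : ∑ k, f (rectDiag A k) ≤ ∑ i, ∑ j, f (A i j) := by
  rw [← Fintype.sum_prod_type']
  exact Fintype.sum_comp_le_sum_of_injective (f := fun p => f (A p.1 p.2)) rectDiagPos_injective
    fun _ => hf _

lemma IsRectDiagonal.sum_rectDiag_eq_sum_entries {C : Matrix (Fin m) (Fin n) ℝ}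
    (hC : IsRectDiagonal C) {f : ℝ → ℝ} (hf : f 0 = 0) :
    ∑ k, f (rectDiag C k) = ∑ i, ∑ j, f (C i j) := by
  rw [← Fintype.sum_prod_type']
  refine Fintype.sum_of_injective _ rectDiagPos_injective _ _ (fun p hp => ?_) fun _ => rfl
  rw [hC p.1 p.2 fun h => hp (mem_range_rectDiagPos h), hf]

lemma IsRectDiagonal.transpose_mul_self {C : Matrix (Fin m) (Fin n) ℝ} (hC : IsRectDiagonal C) :
    Cᵀ * C = diagonal fun j => ∑ i, C i j ^ 2 := by
  ext j j'
  rcases eq_or_ne j j' with rfl | hne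
  · simp [mul_apply, sq]
  rw [diagonal_apply_ne _ hne, mul_apply]
  refine sum_eq_zero fun i _ => ?_
  rcases eq_or_ne (i : ℕ) j with hij | hij
  · rw [transpose_apply, hC i j' fun h => hne (Fin.ext (hij.symm.trans h)), mul_zero]
  · rw [transpose_apply, hC i j hij, zero_mul]

/-- The eigenvalues of a Hermitian matrix, counted with multiplicity, are the roots of its
characteristic polynomial. -/
lemma nuclearNorm_eq_sum_roots (A : Matrix (Fin m) (Fin n) ℝ) :
    nuclearNorm A = ((Aᵀ * A).charpoly.roots.map Real.sqrt).sum := by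
  rw [← conjTranspose_eq_transpose_of_trivial,
    (isHermitian_conjTranspose_mul_self A).roots_charpoly_eq_eigenvalues, Multiset.map_map]
  rfl

lemma nuclearNorm_of_transpose_mul_self_eq_diagonal {A : Matrix (Fin m) (Fin n) ℝ}
    {d : Fin n → ℝ} (h : Aᵀ * A = diagonal d) : nuclearNorm A = ∑ j, √(d j) := by
  rw [nuclearNorm_eq_sum_roots, h, charpoly_diagonal,
    Polynomial.roots_prod _ _ (prod_ne_zero_iff.mpr fun i _ => Polynomial.X_sub_C_ne_zero _)]
  simp only [Multiset.map_bind, Multiset.sum_bind, Polynomial.roots_X_sub_C,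
    Multiset.map_singleton, Multiset.sum_singleton]
  rfl

lemma IsRectDiagonal.nuclearNorm_eq {C : Matrix (Fin m) (Fin n) ℝ} (hC : IsRectDiagonal C) :
    nuclearNorm C = ∑ k, |rectDiag C k| := by
  rw [nuclearNorm_of_transpose_mul_self_eq_diagonal hC.transpose_mul_self,
    hC.sum_rectDiag_eq_sum_entries abs_zero, sum_comm]
  refine sum_congr rfl fun j _ => Real.sqrt_sum_sq_eq_sum_abs fun k l hk hl => ?_
  have hkj : (k : ℕ) = j := by_contra fun h => hk (hC k j h)
  have hlj : (l : ℕ) = j := by_contra fun h => hl (hC l j h)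
  exact Fin.ext (hkj.trans hlj.symm)

lemma IsRectDiagonal.frobSq_eq {C : Matrix (Fin m) (Fin n) ℝ} (hC : IsRectDiagonal C) :
    frobSq C = ∑ k, rectDiag C k ^ 2 :=
  (hC.sum_rectDiag_eq_sum_entries (zero_pow two_ne_zero)).symm

lemma sum_sq_rectDiag_le_frobSq (A : Matrix (Fin m) (Fin n) ℝ) :
    ∑ k, rectDiag A k ^ 2 ≤ frobSq A :=
  sum_rectDiag_le_sum_entries A sq_nonneg

lemma sum_abs_rectDiag_mul_transpose_le {ι : Type*} [Fintype ι] (B : Matrix (Fin m) ι ℝ)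
    (W : Matrix (Fin n) ι ℝ) :
    ∑ k, |rectDiag (B * Wᵀ) k| ≤ ∑ j, √(∑ i, B i j ^ 2) * √(∑ i, W i j ^ 2) := by
  let e₁ := Fin.castLE (min_le_left m n)
  let e₂ := Fin.castLE (min_le_right m n)
  calc ∑ k, |rectDiag (B * Wᵀ) k| ≤ ∑ k, ∑ j, |B (e₁ k) j| * |W (e₂ k) j| := by
        refine sum_le_sum fun k _ => ?_
        simp only [rectDiag, mul_apply, transpose_apply, ← abs_mul]
        exact abs_sum_le_sum_abs _ _
    _ = ∑ j, ∑ k, |B (e₁ k) j| * |W (e₂ k) j| := sum_comm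
    _ ≤ ∑ j, √(∑ k, B (e₁ k) j ^ 2) * √(∑ k, W (e₂ k) j ^ 2) := by
        refine sum_le_sum fun j _ => ?_
        simpa only [sq_abs] using
          Real.sum_mul_le_sqrt_mul_sqrt univ (fun k => |B (e₁ k) j|) (fun k => |W (e₂ k) j|)
    _ ≤ ∑ j, √(∑ i, B i j ^ 2) * √(∑ i, W i j ^ 2) := by
        gcongr with j
        · exact Fintype.sum_comp_le_sum_of_injective (Fin.castLE_injective (min_le_left m n))
            fun i => sq_nonneg (B i j)
        · exact Fintype.sum_comp_le_sum_of_injective (Fin.castLE_injective (min_le_right m n))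
            fun i => sq_nonneg (W i j)

lemma sum_abs_rectDiag_le_nuclearNorm (A : Matrix (Fin m) (Fin n) ℝ) :
    ∑ k, |rectDiag A k| ≤ nuclearNorm A := by
  set hM := isHermitian_conjTranspose_mul_self A
  set W : Matrix (Fin n) (Fin n) ℝ := hM.eigenvectorUnitary.1
  have hWW : Wᵀ * W = 1 := Unitary.coe_star_mul_self hM.eigenvectorUnitary
  have hdiag : (A * W)ᵀ * (A * W) = diagonal hM.eigenvalues := by
    have := hM.conjStarAlgAut_star_eigenvectorUnitary
    rw [Unitary.conjStarAlgAut_apply] at this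
    simpa [Matrix.mul_assoc, W, star_eq_conjTranspose] using this
  calc ∑ k, |rectDiag A k| = ∑ k, |rectDiag (A * W * Wᵀ) k| := by
        rw [Matrix.mul_assoc, mul_eq_one_comm.mp hWW, Matrix.mul_one]
    _ ≤ ∑ j, √(∑ i, (A * W) i j ^ 2) * √(∑ i, W i j ^ 2) :=
        sum_abs_rectDiag_mul_transpose_le _ _
    _ = nuclearNorm A := by
        simp only [sum_sq_apply_eq_transpose_mul_self_apply, hdiag, hWW, diagonal_apply_eq,
          one_apply_eq, Real.sqrt_one, mul_one]
        rfl

end RectDiagonal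

section OrthogonalInvariance

variable {m n : ℕ} {U : Matrix (Fin m) (Fin m) ℝ} {V : Matrix (Fin n) (Fin n) ℝ}

lemma transpose_mul_self_orthogonal_conj (A : Matrix (Fin m) (Fin n) ℝ) (hU : Uᵀ * U = 1) :
    (U * A * Vᵀ)ᵀ * (U * A * Vᵀ) = V * (Aᵀ * A) * Vᵀ := by
  simp only [transpose_mul, transpose_transpose, Matrix.mul_assoc]
  rw [← Matrix.mul_assoc Uᵀ, hU, Matrix.one_mul]

lemma frobSq_eq_trace (A : Matrix (Fin m) (Fin n) ℝ) : frobSq A = (Aᵀ * A).trace := by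
  rw [frobSq, sum_comm]
  simp [trace, mul_apply, sq]

lemma frobSq_orthogonal_conj (A : Matrix (Fin m) (Fin n) ℝ) (hU : Uᵀ * U = 1)
    (hV : Vᵀ * V = 1) : frobSq (U * A * Vᵀ) = frobSq A := by
  rw [frobSq_eq_trace, frobSq_eq_trace, transpose_mul_self_orthogonal_conj A hU, trace_mul_comm,
    ← Matrix.mul_assoc, hV, Matrix.one_mul]

lemma nuclearNorm_orthogonal_conj (A : Matrix (Fin m) (Fin n) ℝ) (hU : Uᵀ * U = 1)
    (hV : Vᵀ * V = 1) : nuclearNorm (U * A * Vᵀ) = nuclearNorm A := by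
  rw [nuclearNorm_eq_sum_roots, nuclearNorm_eq_sum_roots, transpose_mul_self_orthogonal_conj A hU,
    Matrix.mul_assoc, charpoly_mul_comm, Matrix.mul_assoc, hV, Matrix.mul_one]

end OrthogonalInvariance

lemma isMinOn_softThresh {τ : ℝ} (hτ : 0 ≤ τ) (σ : ℝ) :
    IsMinOn (fun a => τ * |a| + 1 / 2 * (a - σ) ^ 2) Set.univ (softThresh τ σ) := by
  refine isMinOn_univ_iff.mpr fun a => ?_
  rcases le_or_gt |σ| τ with hσ | hσ
  · have haσ : a * σ ≤ |a| * τ := calc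
      a * σ ≤ |a * σ| := le_abs_self _
      _ ≤ |a| * τ := by rw [abs_mul]; exact mul_le_mul_of_nonneg_left hσ (abs_nonneg a)
    simp only [softThresh, max_eq_right (sub_nonpos.mpr hσ), mul_zero, abs_zero]
    nlinarith [sq_nonneg a]
  rcases lt_or_gt_of_ne (show σ ≠ 0 by rintro rfl; rw [abs_zero] at hσ; linarith) with hneg | hpos
  · rw [abs_of_neg hneg] at hσ
    simp only [softThresh, Real.sign_of_neg hneg, abs_of_neg hneg, max_eq_left (sub_pos.mpr hσ).le]
    rw [show -1 * (-σ - τ) = σ + τ by ring, abs_of_neg (by linarith)]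
    nlinarith [neg_abs_le a, sq_nonneg (a - σ - τ)]
  · rw [abs_of_pos hpos] at hσ
    simp only [softThresh, Real.sign_of_pos hpos, abs_of_pos hpos, max_eq_left (sub_pos.mpr hσ).le]
    rw [one_mul, abs_of_pos (by linarith)]
    nlinarith [le_abs_self a, sq_nonneg (a - σ + τ)]

theorem stmt_2_general (m n : ℕ) (τ : ℝ) (hτ : 0 < τ)
    (Q : Matrix (Fin m) (Fin n) ℝ)
    (U : Matrix (Fin m) (Fin m) ℝ) (V : Matrix (Fin n) (Fin n) ℝ)
    (Sig : Matrix (Fin m) (Fin n) ℝ)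
    (hU : Uᵀ * U = 1) (hV : Vᵀ * V = 1)
    (hSigdiag : ∀ (i : Fin m) (j : Fin n), (i : ℕ) ≠ (j : ℕ) → Sig i j = 0)
    (hQ : Q = U * Sig * Vᵀ) :
    ∀ P : Matrix (Fin m) (Fin n) ℝ,
      τ * nuclearNorm (U * (Matrix.of fun i j => softThresh τ (Sig i j)) * Vᵀ) +
        (1 / 2) * frobSq (U * (Matrix.of fun i j => softThresh τ (Sig i j)) * Vᵀ - Q) ≤
      τ * nuclearNorm P + (1 / 2) * frobSq (P - Q) := by
  intro P
  set S : Matrix (Fin m) (Fin n) ℝ := Matrix.of fun i j => softThresh τ (Sig i j)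
  set A := Uᵀ * P * V
  have hS : IsRectDiagonal S := fun i j h => by simp [S, hSigdiag i j h, softThresh]
  have hSSig : IsRectDiagonal (S - Sig) := fun i j h => by simp [hS i j h, hSigdiag i j h]
  have hP : P = U * A * Vᵀ := by
    simp only [A, ← Matrix.mul_assoc, mul_eq_one_comm.mp hU, Matrix.one_mul]
    rw [Matrix.mul_assoc, mul_eq_one_comm.mp hV, Matrix.mul_one]
  have hSQ : U * S * Vᵀ - Q = U * (S - Sig) * Vᵀ := by rw [hQ, Matrix.mul_sub, Matrix.sub_mul]
  have hPQ : P - Q = U * (A - Sig) * Vᵀ := by rw [hQ, hP, Matrix.mul_sub, Matrix.sub_mul]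
  rw [hSQ, hPQ, frobSq_orthogonal_conj _ hU hV, frobSq_orthogonal_conj _ hU hV,
    nuclearNorm_orthogonal_conj _ hU hV, hP, nuclearNorm_orthogonal_conj _ hU hV,
    hS.nuclearNorm_eq, hSSig.frobSq_eq, mul_sum, mul_sum, ← sum_add_distrib]
  calc ∑ k, (τ * |rectDiag S k| + 1 / 2 * rectDiag (S - Sig) k ^ 2)
      ≤ ∑ k, (τ * |rectDiag A k| + 1 / 2 * (rectDiag A k - rectDiag Sig k) ^ 2) :=
        sum_le_sum fun k _ => isMinOn_univ_iff.mp (isMinOn_softThresh hτ.le _) _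
    _ ≤ τ * nuclearNorm A + 1 / 2 * frobSq (A - Sig) := by
        rw [sum_add_distrib, ← mul_sum, ← mul_sum]
        gcongr
        · exact sum_abs_rectDiag_le_nuclearNorm A
        · exact sum_sq_rectDiag_le_frobSq (A - Sig)

/-- Singular value thresholding: for τ > 0 and Q = U Sig Vᵀ an SVD of Q
(U, V orthogonal, Sig a rectangular diagonal matrix with nonnegative diagonal),
the matrix P* = U S_τ(Sig) Vᵀ minimizes P ↦ τ‖P‖_* + (1/2)‖P − Q‖_F². -/
theorem stmt_2 (m n : ℕ) (τ : ℝ) (hτ : 0 < τ)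
    (Q : Matrix (Fin m) (Fin n) ℝ)
    (U : Matrix (Fin m) (Fin m) ℝ) (V : Matrix (Fin n) (Fin n) ℝ)
    (Sig : Matrix (Fin m) (Fin n) ℝ)
    (hU : Uᵀ * U = 1) (hV : Vᵀ * V = 1)
    (hSigdiag : ∀ (i : Fin m) (j : Fin n), (i : ℕ) ≠ (j : ℕ) → Sig i j = 0)
    (hSigpos : ∀ (i : Fin m) (j : Fin n), (i : ℕ) = (j : ℕ) → 0 ≤ Sig i j)
    (hQ : Q = U * Sig * Vᵀ) :
    ∀ P : Matrix (Fin m) (Fin n) ℝ,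
      τ * nuclearNorm (U * (Matrix.of fun i j => softThresh τ (Sig i j)) * Vᵀ) +
        (1 / 2) * frobSq (U * (Matrix.of fun i j => softThresh τ (Sig i j)) * Vᵀ - Q) ≤
      τ * nuclearNorm P + (1 / 2) * frobSq (P - Q) :=
  stmt_2_general m n τ hτ Q U V Sig hU hV hSigdiag hQ
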